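/- arXiv:2206.01196 — 2 statements merged into one kernel-verified Lean document; each statement's English description precedes it below -/
import Mathlib

section
/- Refined scalar curvature formula for solutions of the weighted Monge–Ampère equation: if u solves the weighted Monge–Ampère equation, then at every point of N one has s = (1/4)(|u_{,ijk}|²_g − g^{pq} (u_{,pi} ξ^i − v_p)(u_{,qj} ξ^j − v_q)). -/
open scoped BigOperators
noncomputable section

namespace KRS

variable {n : ℕ}

/-- Partial derivative of `f` in the `i`-th coordinate direction. -/
def pd (i : Fin n) (f : (Fin n → ℝ) → ℝ) : (Fin n → ℝ) → ℝ :=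
  fun x => fderiv ℝ f x (Pi.single i 1)

/-- The Hessian matrix `g(x)` of `u`, with entries `g_{ij} = ∂²u/∂x^i∂x^j`. -/
def hessian (u : (Fin n → ℝ) → ℝ) (x : Fin n → ℝ) : Matrix (Fin n) (Fin n) ℝ :=
  Matrix.of fun i j => pd i (pd j u) x

/-- The inverse matrix `g(x)⁻¹`, with entries `g^{ij}`. -/
def ginv (u : (Fin n → ℝ) → ℝ) (x : Fin n → ℝ) : Matrix (Fin n) (Fin n) ℝ :=
  (hessian u x)⁻¹

/-- Third iterated partial derivative `u_{,ijk}`. -/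
def d3 (u : (Fin n → ℝ) → ℝ) (i j k : Fin n) : (Fin n → ℝ) → ℝ :=
  pd i (pd j (pd k u))

/-- Fourth iterated partial derivative `u_{,ijkl}`. -/
def d4 (u : (Fin n → ℝ) → ℝ) (i j k l : Fin n) : (Fin n → ℝ) → ℝ :=
  pd i (pd j (pd k (pd l u)))

/-- Christoffel symbols `Γ^k_{ij} = (1/2) g^{kl}(∂_i g_{jl} + ∂_j g_{il} − ∂_l g_{ij})`. -/
def Christoffel (u : (Fin n → ℝ) → ℝ) (k i j : Fin n) : (Fin n → ℝ) → ℝ :=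
  fun x => (1/2) * ∑ l, ginv u x k l * (d3 u i j l x + d3 u j i l x - d3 u l i j x)

/-- Riemann curvature tensor
`Rm_{ijkl} = g_{is}(∂_k Γ^s_{lj} − ∂_l Γ^s_{kj} + Γ^s_{kp} Γ^p_{lj} − Γ^s_{lp} Γ^p_{kj})`. -/
def Rm (u : (Fin n → ℝ) → ℝ) (i j k l : Fin n) : (Fin n → ℝ) → ℝ :=
  fun x => ∑ s, hessian u x i s *
    (pd k (Christoffel u s l j) x - pd l (Christoffel u s k j) x
      + ∑ p, Christoffel u s k p x * Christoffel u p l j x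
      - ∑ p, Christoffel u s l p x * Christoffel u p k j x)

/-- Ricci tensor `Ric_{ij} = ∂_k Γ^k_{ij} − ∂_j Γ^k_{ik} + Γ^k_{kp} Γ^p_{ij} − Γ^k_{jp} Γ^p_{ik}`. -/
def Ricci (u : (Fin n → ℝ) → ℝ) (i j : Fin n) : (Fin n → ℝ) → ℝ :=
  fun x => (∑ k, pd k (Christoffel u k i j) x) - (∑ k, pd j (Christoffel u k i k) x)
    + (∑ k, ∑ p, Christoffel u k k p x * Christoffel u p i j x)
    - (∑ k, ∑ p, Christoffel u k j p x * Christoffel u p i k x)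

/-- Scalar curvature `s = g^{ij} Ric_{ij}`. -/
def scalarCurv (u : (Fin n → ℝ) → ℝ) : (Fin n → ℝ) → ℝ :=
  fun x => ∑ i, ∑ j, ginv u x i j * Ricci u i j x

/-- Covariant Hessian `(∇²φ)_{ij} = φ_{,ij} − Γ^k_{ij} φ_{,k}`. -/
def covHess (u φ : (Fin n → ℝ) → ℝ) (i j : Fin n) : (Fin n → ℝ) → ℝ :=
  fun x => pd i (pd j φ) x - ∑ k, Christoffel u k i j x * pd k φ x

/-- Laplace–Beltrami operator `Δφ = g^{ij} (∇²φ)_{ij}`. -/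
def laplacian (u φ : (Fin n → ℝ) → ℝ) : (Fin n → ℝ) → ℝ :=
  fun x => ∑ i, ∑ j, ginv u x i j * covHess u φ i j x

/-- Weighted (drift) Laplacian `Δ_φ F = ΔF − g^{ij} φ_{,i} F_{,j}`. -/
def driftLap (u φ F : (Fin n → ℝ) → ℝ) : (Fin n → ℝ) → ℝ :=
  fun x => laplacian u F x - ∑ i, ∑ j, ginv u x i j * pd i φ x * pd j F x

/-- Bakry–Émery Ricci tensor `(Ric_φ)_{ij} = Ric_{ij} + (∇²φ)_{ij}`. -/
def ricciPhi (u φ : (Fin n → ℝ) → ℝ) (i j : Fin n) : (Fin n → ℝ) → ℝ :=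
  fun x => Ricci u i j x + covHess u φ i j x

/-- Pointwise squared `g`-norm of the third derivative tensor:
`|u_{,ijk}|²_g = g^{ip} g^{jq} g^{kr} u_{,ijk} u_{,pqr}`. -/
def norm3 (u : (Fin n → ℝ) → ℝ) : (Fin n → ℝ) → ℝ :=
  fun x => ∑ i, ∑ j, ∑ k, ∑ p, ∑ q, ∑ r,
    ginv u x i p * ginv u x j q * ginv u x k r * d3 u i j k x * d3 u p q r x

/-- The canonical weight function `φ = (1/2)(u_{,p} ξ^p + v_q x^q)`. -/
def weight (u : (Fin n → ℝ) → ℝ) (ξ v : Fin n → ℝ) : (Fin n → ℝ) → ℝ :=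
  fun x => (1/2) * ((∑ p, pd p u x * ξ p) + ∑ q, v q * x q)

/-- `u` solves the weighted Monge–Ampère equation
`log det g(x) = −v_p x^p + u_{,q}(x) ξ^q + c` on `N`. -/
def MAeq (u : (Fin n → ℝ) → ℝ) (N : Set (Fin n → ℝ)) (v ξ : Fin n → ℝ) (c : ℝ) : Prop :=
  ∀ x ∈ N, Real.log (hessian u x).det = -(∑ p, v p * x p) + (∑ q, pd q u x * ξ q) + c

/-- Covariant derivative of the third derivative tensor:
`(∇T)_{lijk} = u_{,ijkl} − Γ^s_{li} u_{,sjk} − Γ^s_{lj} u_{,isk} − Γ^s_{lk} u_{,ijs}`. -/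
def covT (u : (Fin n → ℝ) → ℝ) (l i j k : Fin n) : (Fin n → ℝ) → ℝ :=
  fun x => d4 u i j k l x - (∑ s, Christoffel u s l i x * d3 u s j k x)
    - (∑ s, Christoffel u s l j x * d3 u i s k x)
    - (∑ s, Christoffel u s l k x * d3 u i j s x)

/-- Completeness of the Hessian metric `g = D²u` on `N`: every C¹ curve
`γ : [0,1) → N` that eventually leaves every compact subset of `N`
has infinite `g`-length. -/
def HessComplete (u : (Fin n → ℝ) → ℝ) (N : Set (Fin n → ℝ)) : Prop :=
  ∀ γ : ℝ → (Fin n → ℝ),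
    ContDiffOn ℝ 1 γ (Set.Ico (0:ℝ) 1) →
    (∀ t ∈ Set.Ico (0:ℝ) 1, γ t ∈ N) →
    (∀ K : Set (Fin n → ℝ), IsCompact K → K ⊆ N →
      ∃ tK ∈ Set.Ico (0:ℝ) 1, ∀ t ∈ Set.Ioo tK 1, γ t ∉ K) →
    ∫⁻ t in Set.Ioo (0:ℝ) 1,
      ENNReal.ofReal (Real.sqrt (∑ i, ∑ j,
        hessian u (γ t) i j * deriv γ t i * deriv γ t j)) = ⊤


/-! ### Auxiliary partial-derivative toolkit -/

section PDTools

variable {f g : (Fin n → ℝ) → ℝ} {x : Fin n → ℝ} {i j : Fin n}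

theorem pd_congr (h : f =ᶠ[nhds x] g) : pd i f x = pd i g x := by
  unfold pd; rw [Filter.EventuallyEq.fderiv_eq h]

theorem pd_congr_on {N : Set (Fin n → ℝ)} (hN : IsOpen N) (hx : x ∈ N)
    (h : ∀ y ∈ N, f y = g y) : pd i f x = pd i g x :=
  pd_congr (Filter.eventually_iff_exists_mem.2 ⟨N, hN.mem_nhds hx, h⟩)

theorem pd_add (hf : DifferentiableAt ℝ f x) (hg : DifferentiableAt ℝ g x) :
    pd i (fun y => f y + g y) x = pd i f x + pd i g x := by
  unfold pd; rw [fderiv_fun_add hf hg]; rfl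

theorem pd_sub (hf : DifferentiableAt ℝ f x) (hg : DifferentiableAt ℝ g x) :
    pd i (fun y => f y - g y) x = pd i f x - pd i g x := by
  unfold pd; rw [fderiv_fun_sub hf hg]; rfl

theorem pd_mul (hf : DifferentiableAt ℝ f x) (hg : DifferentiableAt ℝ g x) :
    pd i (fun y => f y * g y) x = pd i f x * g x + f x * pd i g x := by
  unfold pd; rw [fderiv_fun_mul hf hg]; simp [mul_comm]; ring

theorem pd_const (c : ℝ) : pd i (fun _ => c) x = 0 := by
  unfold pd; simp

theorem pd_const_mul (hf : DifferentiableAt ℝ f x) (c : ℝ) :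
    pd i (fun y => c * f y) x = c * pd i f x := by
  rw [pd_mul (differentiableAt_const c) hf, pd_const]; ring

theorem pd_mul_const (hf : DifferentiableAt ℝ f x) (c : ℝ) :
    pd i (fun y => f y * c) x = pd i f x * c := by
  rw [pd_mul hf (differentiableAt_const c), pd_const]; ring

theorem pd_sum {ι : Type*} (s : Finset ι) (F : ι → (Fin n → ℝ) → ℝ)
    (hF : ∀ j ∈ s, DifferentiableAt ℝ (F j) x) :
    pd i (fun y => ∑ j ∈ s, F j y) x = ∑ j ∈ s, pd i (F j) x := by
  unfold pd; rw [fderiv_fun_sum hF]; simp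

theorem pd_coord (p : Fin n) : pd i (fun y => y p) x = if p = i then 1 else 0 := by
  unfold pd
  have : (fun y : Fin n → ℝ => y p) = (ContinuousLinearMap.proj p : (Fin n → ℝ) →L[ℝ] ℝ) := rfl
  rw [this, ContinuousLinearMap.fderiv]
  simp [Pi.single_apply, eq_comm]

theorem pd_log (hf : DifferentiableAt ℝ f x) (hx : f x ≠ 0) :
    pd i (fun y => Real.log (f y)) x = (f x)⁻¹ * pd i f x := by
  unfold pd
  rw [(hf.hasFDerivAt.log hx).fderiv]; simp

theorem pd_contDiffAt (hf : ContDiffAt ℝ (⊤ : ℕ∞) f x) (i : Fin n) :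
    ContDiffAt ℝ (⊤ : ℕ∞) (pd i f) x := by
  have h1 : ContDiffAt ℝ (⊤ : ℕ∞) (fderiv ℝ f) x := hf.fderiv_right (by simp)
  exact (ContinuousLinearMap.apply ℝ ℝ (Pi.single i 1 : Fin n → ℝ)).contDiff.contDiffAt.comp x h1

theorem diffAt_prod {ι : Type*} [DecidableEq ι] {s : Finset ι} {F : ι → (Fin n → ℝ) → ℝ}
    (hF : ∀ j ∈ s, DifferentiableAt ℝ (F j) x) :
    DifferentiableAt ℝ (fun y => ∏ j ∈ s, F j y) x :=
  (HasFDerivAt.finset_prod fun k hk => (hF k hk).hasFDerivAt).differentiableAt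

theorem pd_prod {ι : Type*} [DecidableEq ι] (s : Finset ι) (F : ι → (Fin n → ℝ) → ℝ)
    (hF : ∀ j ∈ s, DifferentiableAt ℝ (F j) x) :
    pd i (fun y => ∏ j ∈ s, F j y) x
      = ∑ j ∈ s, pd i (F j) x * ∏ k ∈ s.erase j, F k x := by
  unfold pd; rw [fderiv_finset_prod hF]; simp [mul_comm]

theorem cdat_sum {ι : Type*} {s : Finset ι} {F : ι → (Fin n → ℝ) → ℝ}
    (hf : ∀ j ∈ s, ContDiffAt ℝ (⊤ : ℕ∞) (F j) x) :
    ContDiffAt ℝ (⊤ : ℕ∞) (fun y => ∑ j ∈ s, F j y) x := ContDiffAt.sum hf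

theorem cdat_prod {ι : Type*} [DecidableEq ι] {s : Finset ι} {F : ι → (Fin n → ℝ) → ℝ}
    (hf : ∀ j ∈ s, ContDiffAt ℝ (⊤ : ℕ∞) (F j) x) :
    ContDiffAt ℝ (⊤ : ℕ∞) (fun y => ∏ j ∈ s, F j y) x := by
  classical
  induction s using Finset.induction with
  | empty => simpa using contDiffAt_const
  | insert a s hns ih =>
    have := (hf a (Finset.mem_insert_self a s)).mul
      (ih fun k hk => hf k (Finset.mem_insert_of_mem hk))
    simpa [Finset.prod_insert hns] using this

theorem pd_comm (hf : ContDiffAt ℝ (⊤ : ℕ∞) f x) : pd i (pd j f) x = pd j (pd i f) x := by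
  have hsym : IsSymmSndFDerivAt ℝ f x := hf.isSymmSndFDerivAt (by rw [minSmoothness_of_isRCLikeNormedField]; exact WithTop.coe_le_coe.mpr (le_top : (2 : ℕ∞) ≤ ⊤))
  have hd : ContDiffAt ℝ (⊤ : ℕ∞) (fderiv ℝ f) x := hf.fderiv_right (by simp)
  have key : ∀ v w : Fin n → ℝ,
      fderiv ℝ (fun y => fderiv ℝ f y w) x v = fderiv ℝ (fderiv ℝ f) x v w := by
    intro v w
    have : (fun y => fderiv ℝ f y w) = (ContinuousLinearMap.apply ℝ ℝ w) ∘ (fderiv ℝ f) := rfl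
    rw [this, fderiv_comp x (ContinuousLinearMap.apply ℝ ℝ w).differentiableAt
      (hd.differentiableAt (by simp))]
    simp
  show fderiv ℝ (fun y => fderiv ℝ f y (Pi.single j 1)) x (Pi.single i 1)
      = fderiv ℝ (fun y => fderiv ℝ f y (Pi.single i 1)) x (Pi.single j 1)
  rw [key, key]
  exact hsym.eq _ _

end PDTools
section Smooth

variable {N : Set (Fin n → ℝ)} {u : (Fin n → ℝ) → ℝ} {x : Fin n → ℝ}

theorem cdat_u (hN : IsOpen N) (hu : ContDiffOn ℝ (⊤ : ℕ∞) u N) (hx : x ∈ N) :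
    ContDiffAt ℝ (⊤ : ℕ∞) u x := hu.contDiffAt (hN.mem_nhds hx)

theorem cdat_hess (hN : IsOpen N) (hu : ContDiffOn ℝ (⊤ : ℕ∞) u N) (hx : x ∈ N) (i j : Fin n) :
    ContDiffAt ℝ (⊤ : ℕ∞) (fun y => hessian u y i j) x :=
  pd_contDiffAt (pd_contDiffAt (cdat_u hN hu hx) j) i

theorem cdat_d3 (hN : IsOpen N) (hu : ContDiffOn ℝ (⊤ : ℕ∞) u N) (hx : x ∈ N) (i j k : Fin n) :
    ContDiffAt ℝ (⊤ : ℕ∞) (d3 u i j k) x :=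
  pd_contDiffAt (pd_contDiffAt (pd_contDiffAt (cdat_u hN hu hx) k) j) i

/-- Smoothness of the determinant of a matrix with smooth entries. -/
theorem cdat_det {M : (Fin n → ℝ) → Matrix (Fin n) (Fin n) ℝ}
    (hM : ∀ i j, ContDiffAt ℝ (⊤ : ℕ∞) (fun y => M y i j) x) :
    ContDiffAt ℝ (⊤ : ℕ∞) (fun y => (M y).det) x := by
  have : (fun y => (M y).det)
      = fun y => ∑ σ : Equiv.Perm (Fin n), (Equiv.Perm.sign σ : ℤ) * ∏ i, M y (σ i) i := by
    funext y; rw [Matrix.det_apply']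
  rw [this]
  exact cdat_sum fun σ _ => (cdat_prod fun i _ => hM (σ i) i).const_smul ((Equiv.Perm.sign σ : ℤ) : ℝ)

theorem cdat_hessdet (hN : IsOpen N) (hu : ContDiffOn ℝ (⊤ : ℕ∞) u N) (hx : x ∈ N) :
    ContDiffAt ℝ (⊤ : ℕ∞) (fun y => (hessian u y).det) x :=
  cdat_det fun i j => cdat_hess hN hu hx i j

theorem cdat_ginv (hN : IsOpen N) (hu : ContDiffOn ℝ (⊤ : ℕ∞) u N)
    (hpos : ∀ y ∈ N, (hessian u y).PosDef) (hx : x ∈ N) (i j : Fin n) :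
    ContDiffAt ℝ (⊤ : ℕ∞) (fun y => ginv u y i j) x := by
  have hdet : (hessian u x).det ≠ 0 := ne_of_gt (hpos x hx).det_pos
  have hform : (fun y => ginv u y i j)
      = fun y => ((hessian u y).det)⁻¹ * ((hessian u y).updateRow j (Pi.single i 1)).det := by
    funext y
    show (hessian u y)⁻¹ i j = _
    rw [Matrix.inv_def]
    simp [Matrix.smul_apply, Matrix.adjugate_apply, Ring.inverse_eq_inv]
  rw [hform]
  refine ContDiffAt.mul ((cdat_hessdet hN hu hx).inv hdet) ?_
  refine cdat_det fun a b => ?_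
  by_cases hab : a = j
  · subst hab
    simpa [Matrix.updateRow_apply] using contDiffAt_const (c := (Pi.single i 1 : Fin n → ℝ) b)
  · simpa [Matrix.updateRow_apply, hab] using cdat_hess hN hu hx a b

end Smooth
section Symm

variable {N : Set (Fin n → ℝ)} {u : (Fin n → ℝ) → ℝ} {x : Fin n → ℝ}

theorem hess_symm (hN : IsOpen N) (hu : ContDiffOn ℝ (⊤ : ℕ∞) u N) (hx : x ∈ N) (i j : Fin n) :
    hessian u x i j = hessian u x j i := pd_comm (cdat_u hN hu hx)

theorem d3_symm12 (hN : IsOpen N) (hu : ContDiffOn ℝ (⊤ : ℕ∞) u N) (hx : x ∈ N) (i j k : Fin n) :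
    d3 u i j k x = d3 u j i k x := pd_comm (pd_contDiffAt (cdat_u hN hu hx) k)

theorem d3_symm23 (hN : IsOpen N) (hu : ContDiffOn ℝ (⊤ : ℕ∞) u N) (hx : x ∈ N) (i j k : Fin n) :
    d3 u i j k x = d3 u i k j x :=
  pd_congr_on hN hx fun y hy => pd_comm (cdat_u hN hu hy)

theorem d3_symm13 (hN : IsOpen N) (hu : ContDiffOn ℝ (⊤ : ℕ∞) u N) (hx : x ∈ N) (i j k : Fin n) :
    d3 u i j k x = d3 u k j i x := by
  rw [d3_symm12 hN hu hx, d3_symm23 hN hu hx, d3_symm12 hN hu hx]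

theorem d3_cycle (hN : IsOpen N) (hu : ContDiffOn ℝ (⊤ : ℕ∞) u N) (hx : x ∈ N) (i j k : Fin n) :
    d3 u i j k x = d3 u j k i x := by
  rw [d3_symm12 hN hu hx, d3_symm23 hN hu hx]

theorem d4_symm12 (hN : IsOpen N) (hu : ContDiffOn ℝ (⊤ : ℕ∞) u N) (hx : x ∈ N) (i j k l : Fin n) :
    d4 u i j k l x = d4 u j i k l x :=
  pd_comm (pd_contDiffAt (pd_contDiffAt (cdat_u hN hu hx) l) k)

theorem d4_symm23 (hN : IsOpen N) (hu : ContDiffOn ℝ (⊤ : ℕ∞) u N) (hx : x ∈ N) (i j k l : Fin n) :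
    d4 u i j k l x = d4 u i k j l x :=
  pd_congr_on hN hx fun y hy => pd_comm (pd_contDiffAt (cdat_u hN hu hy) l)

end Symm

section GinvFacts

variable {N : Set (Fin n → ℝ)} {u : (Fin n → ℝ) → ℝ} {x : Fin n → ℝ}

theorem hess_isUnit_det (hpos : ∀ y ∈ N, (hessian u y).PosDef) (hx : x ∈ N) :
    IsUnit (hessian u x).det := isUnit_iff_ne_zero.2 (ne_of_gt (hpos x hx).det_pos)

theorem hess_mul_ginv (hpos : ∀ y ∈ N, (hessian u y).PosDef) (hx : x ∈ N) (i j : Fin n) :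
    ∑ l, hessian u x i l * ginv u x l j = if i = j then 1 else 0 := by
  have h := Matrix.mul_nonsing_inv (hessian u x) (hess_isUnit_det hpos hx)
  have := congrFun (congrFun h i) j
  rw [Matrix.mul_apply] at this
  simp only [ginv]
  rw [this, Matrix.one_apply]

theorem ginv_mul_hess (hpos : ∀ y ∈ N, (hessian u y).PosDef) (hx : x ∈ N) (i j : Fin n) :
    ∑ l, ginv u x i l * hessian u x l j = if i = j then 1 else 0 := by
  have h := Matrix.nonsing_inv_mul (hessian u x) (hess_isUnit_det hpos hx)
  have := congrFun (congrFun h i) j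
  rw [Matrix.mul_apply] at this
  simp only [ginv]
  rw [this, Matrix.one_apply]

theorem ginv_symm (hN : IsOpen N) (hu : ContDiffOn ℝ (⊤ : ℕ∞) u N)
    (hx : x ∈ N) (i j : Fin n) : ginv u x i j = ginv u x j i := by
  have hsymm : (hessian u x).transpose = hessian u x := by
    ext a b; exact hess_symm hN hu hx b a
  show (hessian u x)⁻¹ i j = (hessian u x)⁻¹ j i
  conv_lhs => rw [← hsymm, ← Matrix.transpose_nonsing_inv]
  simp [Matrix.transpose_apply]

theorem adjugate_eq_det_mul_ginv (hpos : ∀ y ∈ N, (hessian u y).PosDef) (hx : x ∈ N)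
    (i j : Fin n) :
    (hessian u x).adjugate i j = (hessian u x).det * ginv u x i j := by
  have hdet : (hessian u x).det ≠ 0 := ne_of_gt (hpos x hx).det_pos
  show _ = _ * (hessian u x)⁻¹ i j
  rw [Matrix.inv_def, Matrix.smul_apply, Ring.inverse_eq_inv, smul_eq_mul, ← mul_assoc,
    mul_inv_cancel₀ hdet, one_mul]

end GinvFacts
section DetDeriv

variable {N : Set (Fin n → ℝ)} {u : (Fin n → ℝ) → ℝ} {x : Fin n → ℝ}

theorem det_updateCol_leibniz (A : Matrix (Fin n) (Fin n) ℝ) (j : Fin n) (b : Fin n → ℝ) :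
    (A.updateCol j b).det
      = ∑ σ : Equiv.Perm (Fin n), ((Equiv.Perm.sign σ : ℤ) : ℝ)
          * (b (σ j) * ∏ i ∈ Finset.univ.erase j, A (σ i) i) := by
  rw [Matrix.det_apply']
  refine Finset.sum_congr rfl fun σ _ => ?_
  congr 1
  rw [← Finset.mul_prod_erase _ _ (Finset.mem_univ j)]
  congr 1
  · simp [Matrix.updateCol_apply]
  · refine Finset.prod_congr rfl fun i hi => ?_
    simp [Matrix.updateCol_apply, Finset.ne_of_mem_erase hi]

theorem det_updateCol_adj (A : Matrix (Fin n) (Fin n) ℝ) (b : Fin n → ℝ) (j : Fin n) :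
    (A.updateCol j b).det = ∑ k, A.adjugate j k * b k := by
  rw [← Matrix.cramer_apply, Matrix.cramer_eq_adjugate_mulVec]; rfl

theorem pd_hessdet (hN : IsOpen N) (hu : ContDiffOn ℝ (⊤ : ℕ∞) u N) (hx : x ∈ N) (m : Fin n) :
    pd m (fun y => (hessian u y).det) x
      = ∑ j, ∑ k, (hessian u x).adjugate j k * d3 u m k j x := by
  classical
  have hdiff : ∀ a b : Fin n, DifferentiableAt ℝ (fun y => hessian u y a b) x :=
    fun a b => (cdat_hess hN hu hx a b).differentiableAt (by simp)
  have h1 : (fun y => (hessian u y).det)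
      = fun y => ∑ σ : Equiv.Perm (Fin n),
          ((Equiv.Perm.sign σ : ℤ) : ℝ) * ∏ i, hessian u y (σ i) i := by
    funext y; rw [Matrix.det_apply']
  rw [h1, pd_sum _ _ (fun σ _ => (diffAt_prod (fun i _ => hdiff (σ i) i)).const_mul _)]
  have h2 : ∀ σ : Equiv.Perm (Fin n),
      pd m (fun y => ((Equiv.Perm.sign σ : ℤ) : ℝ) * ∏ i, hessian u y (σ i) i) x
      = ((Equiv.Perm.sign σ : ℤ) : ℝ)
          * ∑ j, d3 u m (σ j) j x * ∏ i ∈ Finset.univ.erase j, hessian u x (σ i) i := by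
    intro σ
    rw [pd_const_mul (diffAt_prod (fun i _ => hdiff (σ i) i)),
      pd_prod _ _ (fun i _ => hdiff (σ i) i)]
    rfl
  rw [Finset.sum_congr rfl fun σ _ => h2 σ]
  have h3 : ∀ j : Fin n,
      ((hessian u x).updateCol j fun k => d3 u m k j x).det
        = ∑ σ : Equiv.Perm (Fin n), ((Equiv.Perm.sign σ : ℤ) : ℝ)
            * (d3 u m (σ j) j x * ∏ i ∈ Finset.univ.erase j, hessian u x (σ i) i) :=
    fun j => det_updateCol_leibniz _ j _
  calc ∑ σ : Equiv.Perm (Fin n), ((Equiv.Perm.sign σ : ℤ) : ℝ)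
          * ∑ j, d3 u m (σ j) j x * ∏ i ∈ Finset.univ.erase j, hessian u x (σ i) i
      = ∑ σ : Equiv.Perm (Fin n), ∑ j, ((Equiv.Perm.sign σ : ℤ) : ℝ)
          * (d3 u m (σ j) j x * ∏ i ∈ Finset.univ.erase j, hessian u x (σ i) i) :=
        Finset.sum_congr rfl fun σ _ => Finset.mul_sum _ _ _
    _ = ∑ j, ∑ σ : Equiv.Perm (Fin n), ((Equiv.Perm.sign σ : ℤ) : ℝ)
          * (d3 u m (σ j) j x * ∏ i ∈ Finset.univ.erase j, hessian u x (σ i) i) :=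
        Finset.sum_comm
    _ = ∑ j, ((hessian u x).updateCol j (fun k => d3 u m k j x)).det := by
        exact Finset.sum_congr rfl fun j _ => (h3 j).symm
    _ = ∑ j, ∑ k, (hessian u x).adjugate j k * d3 u m k j x :=
        Finset.sum_congr rfl fun j _ => det_updateCol_adj _ _ j

theorem pd_logdet (hN : IsOpen N) (hu : ContDiffOn ℝ (⊤ : ℕ∞) u N)
    (hpos : ∀ y ∈ N, (hessian u y).PosDef) (hx : x ∈ N) (m : Fin n) :
    pd m (fun y => Real.log (hessian u y).det) x
      = ∑ k, ∑ l, ginv u x k l * d3 u m k l x := by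
  have hdet : (hessian u x).det ≠ 0 := ne_of_gt (hpos x hx).det_pos
  rw [pd_log ((cdat_hessdet hN hu hx).differentiableAt (by simp)) hdet,
    pd_hessdet hN hu hx m]
  rw [Finset.mul_sum]
  refine Finset.sum_congr rfl fun j _ => ?_
  rw [Finset.mul_sum]
  refine Finset.sum_congr rfl fun k _ => ?_
  rw [adjugate_eq_det_mul_ginv hpos hx, d3_symm23 hN hu hx m k j]
  field_simp
end DetDeriv
section GinvDeriv

variable {N : Set (Fin n → ℝ)} {u : (Fin n → ℝ) → ℝ} {x : Fin n → ℝ}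

theorem pd_neg {f : (Fin n → ℝ) → ℝ} {x : Fin n → ℝ} {i : Fin n} :
    pd i (fun y => -(f y)) x = -pd i f x := by
  unfold pd; rw [fderiv_fun_neg]; rfl

theorem sum4_swap (F : Fin n → Fin n → Fin n → Fin n → ℝ) :
    ∑ k, ∑ l, ∑ a, ∑ b, F k l a b = ∑ a, ∑ b, ∑ k, ∑ l, F k l a b := by
  calc ∑ k, ∑ l, ∑ a, ∑ b, F k l a b
      = ∑ k, ∑ a, ∑ l, ∑ b, F k l a b :=
        Finset.sum_congr rfl fun k _ => Finset.sum_comm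
    _ = ∑ a, ∑ k, ∑ l, ∑ b, F k l a b := Finset.sum_comm
    _ = ∑ a, ∑ k, ∑ b, ∑ l, F k l a b :=
        Finset.sum_congr rfl fun a _ => Finset.sum_congr rfl fun k _ => Finset.sum_comm
    _ = ∑ a, ∑ b, ∑ k, ∑ l, F k l a b :=
        Finset.sum_congr rfl fun a _ => Finset.sum_comm

/-- `PG u x m k l` is the value of `∂_m g^{kl}` at `x`. -/
def PG (u : (Fin n → ℝ) → ℝ) (x : Fin n → ℝ) (m k l : Fin n) : ℝ :=
  -∑ a, ∑ b, ginv u x k a * ginv u x b l * d3 u m a b x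

theorem pd_ginv (hN : IsOpen N) (hu : ContDiffOn ℝ (⊤ : ℕ∞) u N)
    (hpos : ∀ y ∈ N, (hessian u y).PosDef) (hx : x ∈ N) (m k j : Fin n) :
    pd m (fun y => ginv u y k j) x = PG u x m k j := by
  classical
  have hdG : ∀ a b : Fin n, DifferentiableAt ℝ (fun y => hessian u y a b) x :=
    fun a b => (cdat_hess hN hu hx a b).differentiableAt (by simp)
  have hdH : ∀ a b : Fin n, DifferentiableAt ℝ (fun y => ginv u y a b) x :=
    fun a b => (cdat_ginv hN hu hpos hx a b).differentiableAt (by simp)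
  -- differentiate the identity `∑ l, g_{il} g^{lj} = δ_{ij}` on N
  have key : ∀ i : Fin n,
      ∑ l, (d3 u m i l x * ginv u x l j + hessian u x i l * pd m (fun y => ginv u y l j) x)
        = 0 := by
    intro i
    have h0 : pd m (fun y => ∑ l, hessian u y i l * ginv u y l j) x
        = pd m (fun _ => if i = j then (1:ℝ) else 0) x :=
      pd_congr_on hN hx fun y hy => hess_mul_ginv hpos hy i j
    rw [pd_const] at h0
    rw [pd_sum _ _ (fun l _ => (hdG i l).fun_mul (hdH l j))] at h0
    rw [← h0]
    refine Finset.sum_congr rfl fun l _ => ?_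
    rw [pd_mul (hdG i l) (hdH l j)]
    rfl
  -- now solve for `pd m (ginv · k j)`
  have solve : ∀ l : Fin n, ∑ i, hessian u x l i * pd m (fun y => ginv u y i j) x
      = -∑ b, d3 u m l b x * ginv u x b j := by
    intro l
    have := key l
    rw [Finset.sum_add_distrib] at this
    linarith [this]
  calc pd m (fun y => ginv u y k j) x
      = ∑ i, (if k = i then (1:ℝ) else 0) * pd m (fun y => ginv u y i j) x := by
        simp
    _ = ∑ i, (∑ l, ginv u x k l * hessian u x l i) * pd m (fun y => ginv u y i j) x :=
        Finset.sum_congr rfl fun i _ => by rw [ginv_mul_hess hpos hx k i]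
    _ = ∑ l, ginv u x k l * ∑ i, hessian u x l i * pd m (fun y => ginv u y i j) x := by
        rw [Finset.sum_congr rfl fun i (_ : i ∈ Finset.univ) =>
          Finset.sum_mul Finset.univ (fun l => ginv u x k l * hessian u x l i)
            (pd m (fun y => ginv u y i j) x)]
        rw [Finset.sum_comm]
        refine Finset.sum_congr rfl fun l _ => ?_
        rw [Finset.mul_sum]
        exact Finset.sum_congr rfl fun i _ => by ring
    _ = PG u x m k j := by
        rw [Finset.sum_congr rfl fun l (_ : l ∈ Finset.univ) =>
          congrArg (fun t => ginv u x k l * t) (solve l)]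
        simp only [mul_neg, PG]
        rw [← Finset.sum_neg_distrib]
        refine Finset.sum_congr rfl fun a _ => ?_
        rw [neg_inj, Finset.mul_sum]
        exact Finset.sum_congr rfl fun b _ => by ring
end GinvDeriv
section MAcons

variable {N : Set (Fin n → ℝ)} {u : (Fin n → ℝ) → ℝ} {x : Fin n → ℝ}
variable {v ξ : Fin n → ℝ} {c : ℝ}

theorem diff_coord {p : Fin n} : DifferentiableAt ℝ (fun y : Fin n → ℝ => y p) x :=
  (ContinuousLinearMap.proj p : (Fin n → ℝ) →L[ℝ] ℝ).differentiableAt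

theorem con1 (hN : IsOpen N) (hu : ContDiffOn ℝ (⊤ : ℕ∞) u N)
    (hpos : ∀ y ∈ N, (hessian u y).PosDef) (hMA : MAeq u N v ξ c) (hx : x ∈ N) (m : Fin n) :
    ∑ k, ∑ l, ginv u x k l * d3 u m k l x = (∑ q, hessian u x m q * ξ q) - v m := by
  have dA : DifferentiableAt ℝ (fun y : Fin n → ℝ => ∑ p, v p * y p) x :=
    DifferentiableAt.fun_sum fun p _ => diff_coord.const_mul (v p)
  have dB : DifferentiableAt ℝ (fun y => ∑ q, pd q u y * ξ q) x :=
    DifferentiableAt.fun_sum fun q _ =>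
      ((pd_contDiffAt (cdat_u hN hu hx) q).differentiableAt (by simp)).mul_const (ξ q)
  have h0 : pd m (fun y => Real.log (hessian u y).det) x
      = pd m (fun y => -(∑ p, v p * y p) + (∑ q, pd q u y * ξ q) + c) x :=
    pd_congr_on hN hx fun y hy => hMA y hy
  rw [pd_logdet hN hu hpos hx m] at h0
  rw [pd_add (dA.fun_neg.fun_add dB) (differentiableAt_const c),
    pd_add dA.fun_neg dB, pd_const, pd_neg,
    pd_sum _ _ (fun p _ => diff_coord.const_mul (v p)),
    pd_sum _ _ (fun q _ =>
      ((pd_contDiffAt (cdat_u hN hu hx) q).differentiableAt (by simp)).mul_const (ξ q))] at h0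
  have e1 : ∑ p, pd m (fun y => v p * y p) x = v m := by
    rw [Finset.sum_congr rfl fun p (_ : p ∈ Finset.univ) => pd_const_mul diff_coord (v p)]
    rw [Finset.sum_congr rfl fun p (_ : p ∈ Finset.univ) =>
      congrArg (fun t => v p * t) (pd_coord p)]
    simp
  have e2 : ∑ q, pd m (fun y => pd q u y * ξ q) x = ∑ q, hessian u x m q * ξ q := by
    refine Finset.sum_congr rfl fun q _ => ?_
    rw [pd_mul_const ((pd_contDiffAt (cdat_u hN hu hx) q).differentiableAt (by simp)) (ξ q)]
    rfl
  rw [e1, e2] at h0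
  rw [h0]; ring

theorem con2 (hN : IsOpen N) (hu : ContDiffOn ℝ (⊤ : ℕ∞) u N)
    (hpos : ∀ y ∈ N, (hessian u y).PosDef) (hMA : MAeq u N v ξ c) (hx : x ∈ N) (i j : Fin n) :
    ∑ k, ∑ l, ginv u x k l * d4 u i j k l x
      = (∑ q, d3 u i j q x * ξ q)
        + ∑ k, ∑ l, ∑ a, ∑ b,
            ginv u x k a * ginv u x l b * d3 u i a b x * d3 u j k l x := by
  classical
  have hdH : ∀ a b : Fin n, DifferentiableAt ℝ (fun y => ginv u y a b) x :=
    fun a b => (cdat_ginv hN hu hpos hx a b).differentiableAt (by simp)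
  have hdT : ∀ a b c' : Fin n, DifferentiableAt ℝ (d3 u a b c') x :=
    fun a b c' => (cdat_d3 hN hu hx a b c').differentiableAt (by simp)
  have hdG : ∀ a b : Fin n, DifferentiableAt ℝ (fun y => hessian u y a b) x :=
    fun a b => (cdat_hess hN hu hx a b).differentiableAt (by simp)
  have h0 : pd j (fun y => ∑ k, ∑ l, ginv u y k l * d3 u i k l y) x
      = pd j (fun y => (∑ q, hessian u y i q * ξ q) - v i) x :=
    pd_congr_on hN hx fun y hy => by
      rw [con1 hN hu hpos hMA hy i]
  -- expand LHS of h0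
  rw [pd_sum _ _ (fun k _ => DifferentiableAt.fun_sum fun l _ => (hdH k l).fun_mul (hdT i k l))] at h0
  rw [Finset.sum_congr rfl fun k (_ : k ∈ Finset.univ) =>
    pd_sum (i := j) Finset.univ (fun l => fun y => ginv u y k l * d3 u i k l y)
      (fun l _ => (hdH k l).fun_mul (hdT i k l))] at h0
  rw [Finset.sum_congr rfl fun k (_ : k ∈ Finset.univ) =>
    Finset.sum_congr rfl fun l (_ : l ∈ Finset.univ) =>
      pd_mul (hdH k l) (hdT i k l)] at h0
  -- expand RHS of h0
  rw [pd_sub (DifferentiableAt.fun_sum fun q _ => (hdG i q).mul_const (ξ q))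
      (differentiableAt_const (v i)),
    pd_const,
    pd_sum _ _ (fun q _ => (hdG i q).mul_const (ξ q)),
    Finset.sum_congr rfl fun q (_ : q ∈ Finset.univ) => pd_mul_const (hdG i q) (ξ q)] at h0
  -- rewrite the pieces of h0
  have key : ∑ k, ∑ l, ginv u x k l * d4 u j i k l x
      = (∑ q, d3 u j i q x * ξ q) - ∑ k, ∑ l, PG u x j k l * d3 u i k l x := by
    have hsplit : ∑ k, ∑ l, (pd j (fun y => ginv u y k l) x * d3 u i k l x
          + ginv u x k l * pd j (d3 u i k l) x)
        = (∑ k, ∑ l, PG u x j k l * d3 u i k l x)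
          + ∑ k, ∑ l, ginv u x k l * d4 u j i k l x := by
      rw [← Finset.sum_add_distrib]
      refine Finset.sum_congr rfl fun k _ => ?_
      rw [← Finset.sum_add_distrib]
      refine Finset.sum_congr rfl fun l _ => ?_
      rw [pd_ginv hN hu hpos hx j k l]
      rfl
    have hrhs : (∑ q, pd j (fun y => hessian u y i q) x * ξ q) - (0:ℝ)
        = ∑ q, d3 u j i q x * ξ q := by
      rw [sub_zero]; rfl
    rw [hsplit, hrhs] at h0
    linarith [h0]
  have piece2 : (∑ q, d3 u j i q x * ξ q) - ∑ k, ∑ l, PG u x j k l * d3 u i k l x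
      = (∑ q, d3 u i j q x * ξ q)
        + ∑ k, ∑ l, ∑ a, ∑ b,
            ginv u x k a * ginv u x l b * d3 u i a b x * d3 u j k l x := by
    have e1 : (∑ q, d3 u j i q x * ξ q) = ∑ q, d3 u i j q x * ξ q :=
      Finset.sum_congr rfl fun q _ => by rw [d3_symm12 hN hu hx]
    have e2 : -∑ k, ∑ l, PG u x j k l * d3 u i k l x
        = ∑ k, ∑ l, ∑ a, ∑ b,
            ginv u x k a * ginv u x l b * d3 u i a b x * d3 u j k l x := by
      rw [← Finset.sum_neg_distrib]
      have step1 : ∀ k : Fin n, -∑ l, PG u x j k l * d3 u i k l x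
          = ∑ l, ∑ a, ∑ b,
              (ginv u x a k * ginv u x b l * d3 u i k l x * d3 u j a b x) := by
        intro k
        rw [← Finset.sum_neg_distrib]
        refine Finset.sum_congr rfl fun l _ => ?_
        rw [PG, neg_mul, neg_neg, Finset.sum_mul]
        refine Finset.sum_congr rfl fun a _ => ?_
        rw [Finset.sum_mul]
        refine Finset.sum_congr rfl fun b _ => ?_
        rw [ginv_symm hN hu hx k a, ginv_symm hN hu hx b l]
        ring
      rw [Finset.sum_congr rfl fun k (_ : k ∈ Finset.univ) => step1 k]
      exact sum4_swap (fun k l a b =>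
        ginv u x a k * ginv u x b l * d3 u i k l x * d3 u j a b x)
    rw [e1, sub_eq_add_neg, e2]
  have lhs_eq : ∑ k, ∑ l, ginv u x k l * d4 u i j k l x
      = ∑ k, ∑ l, ginv u x k l * d4 u j i k l x :=
    Finset.sum_congr rfl fun k _ => Finset.sum_congr rfl fun l _ => by
      rw [d4_symm12 hN hu hx]
  rw [lhs_eq, key, piece2]
end MAcons
section Chris

variable {N : Set (Fin n → ℝ)} {u : (Fin n → ℝ) → ℝ} {x : Fin n → ℝ}
variable {v ξ : Fin n → ℝ} {c : ℝ}

theorem chris_eq (hN : IsOpen N) (hu : ContDiffOn ℝ (⊤ : ℕ∞) u N) {y : Fin n → ℝ} (hy : y ∈ N)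
    (k i j : Fin n) :
    Christoffel u k i j y = (1/2) * ∑ l, ginv u y k l * d3 u i j l y := by
  show (1/2) * ∑ l, ginv u y k l * (d3 u i j l y + d3 u j i l y - d3 u l i j y) = _
  congr 1
  refine Finset.sum_congr rfl fun l _ => ?_
  have h1 : d3 u j i l y = d3 u i j l y := (d3_symm12 hN hu hy i j l).symm
  have h2 : d3 u l i j y = d3 u i j l y := by
    rw [d3_symm13 hN hu hy l i j, d3_symm12 hN hu hy j i l]
  rw [h1, h2]; ring

theorem chris_val (hN : IsOpen N) (hu : ContDiffOn ℝ (⊤ : ℕ∞) u N) (hx : x ∈ N) (k i j : Fin n) :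
    Christoffel u k i j x = (1/2) * ∑ l, ginv u x k l * d3 u i j l x :=
  chris_eq hN hu hx k i j

theorem pd_chris (hN : IsOpen N) (hu : ContDiffOn ℝ (⊤ : ℕ∞) u N)
    (hpos : ∀ y ∈ N, (hessian u y).PosDef) (hx : x ∈ N) (m k i j : Fin n) :
    pd m (Christoffel u k i j) x
      = (1/2) * ∑ l, (PG u x m k l * d3 u i j l x + ginv u x k l * d4 u m i j l x) := by
  have hdH : ∀ a b : Fin n, DifferentiableAt ℝ (fun y => ginv u y a b) x :=
    fun a b => (cdat_ginv hN hu hpos hx a b).differentiableAt (by simp)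
  have hdT : ∀ a b c' : Fin n, DifferentiableAt ℝ (d3 u a b c') x :=
    fun a b c' => (cdat_d3 hN hu hx a b c').differentiableAt (by simp)
  have h0 : pd m (Christoffel u k i j) x
      = pd m (fun y => (1/2) * ∑ l, ginv u y k l * d3 u i j l y) x :=
    pd_congr_on hN hx fun y hy => chris_eq hN hu hy k i j
  rw [h0, pd_const_mul (DifferentiableAt.fun_sum fun l _ => (hdH k l).fun_mul (hdT i j l)),
    pd_sum _ _ (fun l _ => (hdH k l).fun_mul (hdT i j l))]
  congr 1
  refine Finset.sum_congr rfl fun l _ => ?_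
  rw [pd_mul (hdH k l) (hdT i j l), pd_ginv hN hu hpos hx m k l]
  rfl

end Chris

section Contr

variable {N : Set (Fin n → ℝ)} {u : (Fin n → ℝ) → ℝ} {x : Fin n → ℝ}
variable {v ξ : Fin n → ℝ} {c : ℝ}

/-- `w_p = u_{,pq} ξ^q − v_p` at the point `x`. -/
def Wf (u : (Fin n → ℝ) → ℝ) (v ξ : Fin n → ℝ) (x : Fin n → ℝ) (p : Fin n) : ℝ :=
  (∑ q, hessian u x p q * ξ q) - v p

theorem con1W (hN : IsOpen N) (hu : ContDiffOn ℝ (⊤ : ℕ∞) u N)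
    (hpos : ∀ y ∈ N, (hessian u y).PosDef) (hMA : MAeq u N v ξ c) (hx : x ∈ N) (m : Fin n) :
    ∑ k, ∑ l, ginv u x k l * d3 u m k l x = Wf u v ξ x m :=
  con1 hN hu hpos hMA hx m

/-- contraction over the first two slots of `T` with the third free -/
theorem conA (hN : IsOpen N) (hu : ContDiffOn ℝ (⊤ : ℕ∞) u N)
    (hpos : ∀ y ∈ N, (hessian u y).PosDef) (hMA : MAeq u N v ξ c) (hx : x ∈ N) (m : Fin n) :
    ∑ k, ∑ l, ginv u x k l * d3 u k l m x = Wf u v ξ x m := by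
  rw [← con1W hN hu hpos hMA hx m]
  refine Finset.sum_congr rfl fun k _ => Finset.sum_congr rfl fun l _ => ?_
  rw [d3_cycle hN hu hx m k l]

/-- contraction over slots 1 and 2 with first two indices of the sum -/
theorem conB (hN : IsOpen N) (hu : ContDiffOn ℝ (⊤ : ℕ∞) u N)
    (hpos : ∀ y ∈ N, (hessian u y).PosDef) (hMA : MAeq u N v ξ c) (hx : x ∈ N) (m : Fin n) :
    ∑ k, ∑ l, ginv u x k l * d3 u k m l x = Wf u v ξ x m := by
  rw [← con1W hN hu hpos hMA hx m]
  refine Finset.sum_congr rfl fun k _ => Finset.sum_congr rfl fun l _ => ?_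
  rw [d3_symm12 hN hu hx k m l]

theorem sum6_shift (F : Fin n → Fin n → Fin n → Fin n → Fin n → Fin n → ℝ) :
    ∑ i, ∑ j, ∑ k, ∑ l, ∑ a, ∑ b, F i j k l a b
      = ∑ i, ∑ a, ∑ b, ∑ j, ∑ k, ∑ l, F i j k l a b := by
  refine Finset.sum_congr rfl fun i _ => ?_
  calc ∑ j, ∑ k, ∑ l, ∑ a, ∑ b, F i j k l a b
      = ∑ j, ∑ a, ∑ b, ∑ k, ∑ l, F i j k l a b :=
        Finset.sum_congr rfl fun j _ => sum4_swap _
    _ = ∑ a, ∑ j, ∑ b, ∑ k, ∑ l, F i j k l a b := Finset.sum_comm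
    _ = ∑ a, ∑ b, ∑ j, ∑ k, ∑ l, F i j k l a b :=
        Finset.sum_congr rfl fun a _ => Finset.sum_comm

end Contr
section Assembly

variable {N : Set (Fin n → ℝ)} {u : (Fin n → ℝ) → ℝ} {x : Fin n → ℝ}
variable {v ξ : Fin n → ℝ} {c : ℝ}

theorem sum_comm3 (F : Fin n → Fin n → Fin n → ℝ) :
    ∑ i, ∑ j, ∑ q, F i j q = ∑ q, ∑ i, ∑ j, F i j q :=
  (Finset.sum_congr rfl fun i _ => Finset.sum_comm).trans Finset.sum_comm

/-- inner sum for the `B` term of the Ricci tensor -/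
theorem SB_inner (hN : IsOpen N) (hu : ContDiffOn ℝ (⊤ : ℕ∞) u N)
    (hpos : ∀ y ∈ N, (hessian u y).PosDef) (hMA : MAeq u N v ξ c) (hx : x ∈ N) (i j : Fin n) :
    ∑ k, pd j (Christoffel u k i k) x = (1/2) * ∑ q, d3 u i j q x * ξ q := by
  rw [Finset.sum_congr rfl fun k (_ : k ∈ Finset.univ) => pd_chris hN hu hpos hx j k i k,
    ← Finset.mul_sum]
  refine congrArg (fun t => (1/2 : ℝ) * t) ?_
  have hsplit : ∑ k, ∑ l, (PG u x j k l * d3 u i k l x + ginv u x k l * d4 u j i k l x)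
      = (∑ k, ∑ l, PG u x j k l * d3 u i k l x)
        + ∑ k, ∑ l, ginv u x k l * d4 u j i k l x := by
    rw [← Finset.sum_add_distrib]
    exact Finset.sum_congr rfl fun k _ => Finset.sum_add_distrib
  rw [hsplit, con2 hN hu hpos hMA hx j i]
  have hcancel : ∑ k, ∑ l, PG u x j k l * d3 u i k l x
      = -∑ k, ∑ l, ∑ a, ∑ b,
          ginv u x k a * ginv u x l b * d3 u j a b x * d3 u i k l x := by
    rw [← Finset.sum_neg_distrib]
    refine Finset.sum_congr rfl fun k _ => ?_
    rw [← Finset.sum_neg_distrib]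
    refine Finset.sum_congr rfl fun l _ => ?_
    rw [PG, neg_mul, neg_inj, Finset.sum_mul]
    refine Finset.sum_congr rfl fun a _ => ?_
    rw [Finset.sum_mul]
    refine Finset.sum_congr rfl fun b _ => ?_
    rw [ginv_symm hN hu hx b l]
  rw [hcancel]
  have hq : ∑ q, d3 u j i q x * ξ q = ∑ q, d3 u i j q x * ξ q :=
    Finset.sum_congr rfl fun q _ => by rw [d3_symm12 hN hu hx]
  rw [hq]
  ring

theorem pull2 (c e : ℝ) (F : Fin n → Fin n → ℝ) :
    ∑ i, ∑ j, c * (F i j * e) = c * ((∑ i, ∑ j, F i j) * e) := by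
  rw [Finset.sum_mul, Finset.mul_sum]
  refine Finset.sum_congr rfl fun i _ => ?_
  rw [Finset.sum_mul, Finset.mul_sum]

theorem SB_eq (hN : IsOpen N) (hu : ContDiffOn ℝ (⊤ : ℕ∞) u N)
    (hpos : ∀ y ∈ N, (hessian u y).PosDef) (hMA : MAeq u N v ξ c) (hx : x ∈ N) :
    ∑ i, ∑ j, ginv u x i j * (∑ k, pd j (Christoffel u k i k) x)
      = (1/2) * ∑ q, Wf u v ξ x q * ξ q := by
  rw [Finset.sum_congr rfl fun i (_ : i ∈ Finset.univ) =>
    Finset.sum_congr rfl fun j (_ : j ∈ Finset.univ) =>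
      congrArg (fun t => ginv u x i j * t) (SB_inner hN hu hpos hMA hx i j)]
  calc ∑ i, ∑ j, ginv u x i j * ((1/2) * ∑ q, d3 u i j q x * ξ q)
      = ∑ i, ∑ j, ∑ q, (1/2) * (ginv u x i j * d3 u i j q x * ξ q) := by
        refine Finset.sum_congr rfl fun i _ => Finset.sum_congr rfl fun j _ => ?_
        rw [Finset.mul_sum, Finset.mul_sum]
        exact Finset.sum_congr rfl fun q _ => by ring
    _ = ∑ q, ∑ i, ∑ j, (1/2) * (ginv u x i j * d3 u i j q x * ξ q) := sum_comm3 _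
    _ = ∑ q, (1/2) * ((∑ i, ∑ j, ginv u x i j * d3 u i j q x) * ξ q) := by
        refine Finset.sum_congr rfl fun q _ => ?_
        refine (pull2 _ _ _).trans ?_
        norm_num
    _ = ∑ q, (1/2) * (Wf u v ξ x q * ξ q) := by
        refine Finset.sum_congr rfl fun q _ => ?_
        rw [conA hN hu hpos hMA hx q]
    _ = (1/2) * ∑ q, Wf u v ξ x q * ξ q := by
        rw [Finset.mul_sum]

end Assembly
section AssemblyC

variable {N : Set (Fin n → ℝ)} {u : (Fin n → ℝ) → ℝ} {x : Fin n → ℝ}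
variable {v ξ : Fin n → ℝ} {c : ℝ}

theorem pull22 (c' : ℝ) (F : Fin n → Fin n → ℝ) :
    ∑ i, ∑ j, c' * F i j = c' * ∑ i, ∑ j, F i j := by
  simp only [Finset.mul_sum]

theorem SC_eq (hN : IsOpen N) (hu : ContDiffOn ℝ (⊤ : ℕ∞) u N)
    (hpos : ∀ y ∈ N, (hessian u y).PosDef) (hMA : MAeq u N v ξ c) (hx : x ∈ N) :
    ∑ i, ∑ j, ginv u x i j * (∑ k, ∑ p, Christoffel u k k p x * Christoffel u p i j x)
      = (1/4) * ∑ p, ∑ q, ginv u x p q * Wf u v ξ x p * Wf u v ξ x q := by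
  have hCk : ∀ p, ∑ k, Christoffel u k k p x = (1/2) * Wf u v ξ x p := by
    intro p
    rw [Finset.sum_congr rfl fun k (_ : k ∈ Finset.univ) => chris_val hN hu hx k k p,
      ← Finset.mul_sum, conB hN hu hpos hMA hx p]
  have hinner : ∀ i j, ∑ k, ∑ p, Christoffel u k k p x * Christoffel u p i j x
      = ∑ p, ∑ m, (1/4) * (Wf u v ξ x p * (ginv u x p m * d3 u i j m x)) := by
    intro i j
    rw [Finset.sum_comm]
    refine Finset.sum_congr rfl fun p _ => ?_
    rw [← Finset.sum_mul, hCk p, chris_val hN hu hx p i j, Finset.mul_sum, Finset.mul_sum]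
    exact Finset.sum_congr rfl fun m _ => by ring
  rw [Finset.sum_congr rfl fun i (_ : i ∈ Finset.univ) =>
    Finset.sum_congr rfl fun j (_ : j ∈ Finset.univ) =>
      congrArg (fun t => ginv u x i j * t) (hinner i j)]
  calc ∑ i, ∑ j, ginv u x i j
        * ∑ p, ∑ m, (1/4) * (Wf u v ξ x p * (ginv u x p m * d3 u i j m x))
      = ∑ i, ∑ j, ∑ p, ∑ m,
          (1/4) * (Wf u v ξ x p * (ginv u x p m * (ginv u x i j * d3 u i j m x))) := by
        refine Finset.sum_congr rfl fun i _ => Finset.sum_congr rfl fun j _ => ?_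
        rw [Finset.mul_sum]
        refine Finset.sum_congr rfl fun p _ => ?_
        rw [Finset.mul_sum]
        exact Finset.sum_congr rfl fun m _ => by ring
    _ = ∑ p, ∑ m, ∑ i, ∑ j,
          (1/4) * (Wf u v ξ x p * (ginv u x p m * (ginv u x i j * d3 u i j m x))) :=
        sum4_swap _
    _ = ∑ p, ∑ m, (1/4) * (ginv u x p m * Wf u v ξ x p * Wf u v ξ x m) := by
        refine Finset.sum_congr rfl fun p _ => Finset.sum_congr rfl fun m _ => ?_
        calc ∑ i, ∑ j, (1/4) * (Wf u v ξ x p * (ginv u x p m * (ginv u x i j * d3 u i j m x)))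
            = ∑ i, ∑ j, ((1/4) * (Wf u v ξ x p * ginv u x p m))
                * (ginv u x i j * d3 u i j m x) := by
              exact Finset.sum_congr rfl fun i _ => Finset.sum_congr rfl fun j _ => by ring
          _ = ((1/4) * (Wf u v ξ x p * ginv u x p m)) * ∑ i, ∑ j,
                ginv u x i j * d3 u i j m x := pull22 _ _
          _ = (1/4) * (ginv u x p m * Wf u v ξ x p * Wf u v ξ x m) := by
              rw [conA hN hu hpos hMA hx m]; ring
    _ = (1/4) * ∑ p, ∑ q, ginv u x p q * Wf u v ξ x p * Wf u v ξ x q := by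
        rw [Finset.mul_sum]
        refine Finset.sum_congr rfl fun p _ => ?_
        rw [Finset.mul_sum]

end AssemblyC
section AssemblyA

variable {N : Set (Fin n → ℝ)} {u : (Fin n → ℝ) → ℝ} {x : Fin n → ℝ}
variable {v ξ : Fin n → ℝ} {c : ℝ}

theorem SA_inner (hN : IsOpen N) (hu : ContDiffOn ℝ (⊤ : ℕ∞) u N)
    (hpos : ∀ y ∈ N, (hessian u y).PosDef) (hMA : MAeq u N v ξ c) (hx : x ∈ N) (i j : Fin n) :
    ∑ k, pd k (Christoffel u k i j) x
      = (1/2) * ((∑ q, d3 u i j q x * ξ q)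
          + (∑ k, ∑ l, ∑ a, ∑ b,
              ginv u x k a * ginv u x l b * d3 u i a b x * d3 u j k l x))
        - (1/2) * (∑ l, ∑ b, ginv u x b l * d3 u i j l x * Wf u v ξ x b) := by
  rw [Finset.sum_congr rfl fun k (_ : k ∈ Finset.univ) => pd_chris hN hu hpos hx k k i j,
    ← Finset.mul_sum]
  have hsplit : ∑ k, ∑ l, (PG u x k k l * d3 u i j l x + ginv u x k l * d4 u k i j l x)
      = (∑ k, ∑ l, PG u x k k l * d3 u i j l x)
        + ∑ k, ∑ l, ginv u x k l * d4 u k i j l x := by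
    rw [← Finset.sum_add_distrib]
    exact Finset.sum_congr rfl fun k _ => Finset.sum_add_distrib
  have hS2a : ∑ k, ∑ l, ginv u x k l * d4 u k i j l x
      = ∑ k, ∑ l, ginv u x k l * d4 u i j k l x := by
    refine Finset.sum_congr rfl fun k _ => Finset.sum_congr rfl fun l _ => ?_
    rw [d4_symm12 hN hu hx k i j l, d4_symm23 hN hu hx i k j l]
  have hS1 : ∑ k, ∑ l, PG u x k k l * d3 u i j l x
      = -∑ l, ∑ b, ginv u x b l * d3 u i j l x * Wf u v ξ x b := by
    calc ∑ k, ∑ l, PG u x k k l * d3 u i j l x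
        = ∑ k, ∑ l, -∑ a, ∑ b,
            ginv u x k a * (ginv u x b l * (d3 u k a b x * d3 u i j l x)) := by
          refine Finset.sum_congr rfl fun k _ => Finset.sum_congr rfl fun l _ => ?_
          rw [PG, neg_mul, neg_inj, Finset.sum_mul]
          refine Finset.sum_congr rfl fun a _ => ?_
          rw [Finset.sum_mul]
          exact Finset.sum_congr rfl fun b _ => by ring
      _ = -∑ k, ∑ l, ∑ a, ∑ b,
            ginv u x k a * (ginv u x b l * (d3 u k a b x * d3 u i j l x)) := by
          rw [← Finset.sum_neg_distrib]
          refine Finset.sum_congr rfl fun k _ => ?_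
          rw [← Finset.sum_neg_distrib]
      _ = -∑ l, ∑ b, ∑ k, ∑ a,
            ginv u x k a * (ginv u x b l * (d3 u k a b x * d3 u i j l x)) := by
          rw [neg_inj]
          calc ∑ k, ∑ l, ∑ a, ∑ b,
                ginv u x k a * (ginv u x b l * (d3 u k a b x * d3 u i j l x))
              = ∑ l, ∑ k, ∑ a, ∑ b,
                ginv u x k a * (ginv u x b l * (d3 u k a b x * d3 u i j l x)) :=
                Finset.sum_comm
            _ = ∑ l, ∑ b, ∑ k, ∑ a,
                ginv u x k a * (ginv u x b l * (d3 u k a b x * d3 u i j l x)) :=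
                Finset.sum_congr rfl fun l _ => sum_comm3 _
      _ = -∑ l, ∑ b, ginv u x b l * d3 u i j l x * Wf u v ξ x b := by
          rw [neg_inj]
          refine Finset.sum_congr rfl fun l _ => Finset.sum_congr rfl fun b _ => ?_
          calc ∑ k, ∑ a, ginv u x k a * (ginv u x b l * (d3 u k a b x * d3 u i j l x))
              = ∑ k, ∑ a, (ginv u x b l * d3 u i j l x) * (ginv u x k a * d3 u k a b x) :=
                Finset.sum_congr rfl fun k _ => Finset.sum_congr rfl fun a _ => by ring
            _ = (ginv u x b l * d3 u i j l x) * ∑ k, ∑ a, ginv u x k a * d3 u k a b x :=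
                pull22 _ _
            _ = ginv u x b l * d3 u i j l x * Wf u v ξ x b := by
                rw [conA hN hu hpos hMA hx b]
  rw [hsplit, hS1, hS2a, con2 hN hu hpos hMA hx i j]
  ring

theorem SA_eq (hN : IsOpen N) (hu : ContDiffOn ℝ (⊤ : ℕ∞) u N)
    (hpos : ∀ y ∈ N, (hessian u y).PosDef) (hMA : MAeq u N v ξ c) (hx : x ∈ N) :
    ∑ i, ∑ j, ginv u x i j * (∑ k, pd k (Christoffel u k i j) x)
      = -(1/2) * (∑ p, ∑ q, ginv u x p q * Wf u v ξ x p * Wf u v ξ x q)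
        + (1/2) * (∑ q, Wf u v ξ x q * ξ q) + (1/2) * norm3 u x := by
  rw [Finset.sum_congr rfl fun i (_ : i ∈ Finset.univ) =>
    Finset.sum_congr rfl fun j (_ : j ∈ Finset.univ) =>
      congrArg (fun t => ginv u x i j * t) (SA_inner hN hu hpos hMA hx i j)]
  have split : ∀ i j : Fin n, ginv u x i j *
        ((1/2) * ((∑ q, d3 u i j q x * ξ q)
          + (∑ k, ∑ l, ∑ a, ∑ b,
              ginv u x k a * ginv u x l b * d3 u i a b x * d3 u j k l x))
        - (1/2) * (∑ l, ∑ b, ginv u x b l * d3 u i j l x * Wf u v ξ x b))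
      = (1/2) * (ginv u x i j * ∑ q, d3 u i j q x * ξ q)
        + (1/2) * (ginv u x i j * ∑ k, ∑ l, ∑ a, ∑ b,
            ginv u x k a * ginv u x l b * d3 u i a b x * d3 u j k l x)
        - (1/2) * (ginv u x i j * ∑ l, ∑ b,
            ginv u x b l * d3 u i j l x * Wf u v ξ x b) := fun i j => by ring
  rw [Finset.sum_congr rfl fun i (_ : i ∈ Finset.univ) =>
    Finset.sum_congr rfl fun j (_ : j ∈ Finset.univ) => split i j]
  have splitsum : ∑ i, ∑ j, ((1/2) * (ginv u x i j * ∑ q, d3 u i j q x * ξ q)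
        + (1/2) * (ginv u x i j * ∑ k, ∑ l, ∑ a, ∑ b,
            ginv u x k a * ginv u x l b * d3 u i a b x * d3 u j k l x)
        - (1/2) * (ginv u x i j * ∑ l, ∑ b,
            ginv u x b l * d3 u i j l x * Wf u v ξ x b))
      = ((∑ i, ∑ j, (1/2) * (ginv u x i j * ∑ q, d3 u i j q x * ξ q))
        + ∑ i, ∑ j, (1/2) * (ginv u x i j * ∑ k, ∑ l, ∑ a, ∑ b,
            ginv u x k a * ginv u x l b * d3 u i a b x * d3 u j k l x))
        - ∑ i, ∑ j, (1/2) * (ginv u x i j * ∑ l, ∑ b,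
            ginv u x b l * d3 u i j l x * Wf u v ξ x b) := by
    rw [Finset.sum_congr rfl fun i (_ : i ∈ Finset.univ) => Finset.sum_sub_distrib _ _,
      Finset.sum_sub_distrib,
      Finset.sum_congr rfl fun i (_ : i ∈ Finset.univ) => Finset.sum_add_distrib,
      Finset.sum_add_distrib]
  rw [splitsum]
  -- piece (a)
  have ha : ∑ i, ∑ j, (1/2) * (ginv u x i j * ∑ q, d3 u i j q x * ξ q)
      = (1/2) * (∑ q, Wf u v ξ x q * ξ q) := by
    calc ∑ i, ∑ j, (1/2) * (ginv u x i j * ∑ q, d3 u i j q x * ξ q)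
        = ∑ i, ∑ j, ∑ q, (1/2) * (ginv u x i j * d3 u i j q x * ξ q) := by
          refine Finset.sum_congr rfl fun i _ => Finset.sum_congr rfl fun j _ => ?_
          rw [Finset.mul_sum, Finset.mul_sum]
          exact Finset.sum_congr rfl fun q _ => by ring
      _ = ∑ q, ∑ i, ∑ j, (1/2) * (ginv u x i j * d3 u i j q x * ξ q) := sum_comm3 _
      _ = ∑ q, (1/2) * ((∑ i, ∑ j, ginv u x i j * d3 u i j q x) * ξ q) :=
          Finset.sum_congr rfl fun q _ => pull2 _ _ _
      _ = (1/2) * (∑ q, Wf u v ξ x q * ξ q) := by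
          rw [Finset.mul_sum]
          refine Finset.sum_congr rfl fun q _ => ?_
          rw [conA hN hu hpos hMA hx q]
  -- piece (b)
  have hb : ∑ i, ∑ j, (1/2) * (ginv u x i j * ∑ k, ∑ l, ∑ a, ∑ b,
        ginv u x k a * ginv u x l b * d3 u i a b x * d3 u j k l x)
      = (1/2) * norm3 u x := by
    calc ∑ i, ∑ j, (1/2) * (ginv u x i j * ∑ k, ∑ l, ∑ a, ∑ b,
          ginv u x k a * ginv u x l b * d3 u i a b x * d3 u j k l x)
        = ∑ i, ∑ j, ∑ k, ∑ l, ∑ a, ∑ b, (1/2) * (ginv u x i j *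
            (ginv u x k a * ginv u x l b * d3 u i a b x * d3 u j k l x)) := by
          simp only [Finset.mul_sum]
          all_goals exact Finset.sum_congr rfl fun i _ => Finset.sum_congr rfl fun j _ =>
            Finset.sum_congr rfl fun k _ => Finset.sum_congr rfl fun l _ =>
            Finset.sum_congr rfl fun a _ => Finset.sum_congr rfl fun b _ => by ring
      _ = ∑ i, ∑ a, ∑ b, ∑ j, ∑ k, ∑ l, (1/2) * (ginv u x i j *
            (ginv u x k a * ginv u x l b * d3 u i a b x * d3 u j k l x)) := sum6_shift _
      _ = (1/2) * norm3 u x := by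
          rw [norm3, Finset.mul_sum]
          refine Finset.sum_congr rfl fun i _ => ?_
          rw [Finset.mul_sum]
          refine Finset.sum_congr rfl fun a _ => ?_
          rw [Finset.mul_sum]
          refine Finset.sum_congr rfl fun b _ => ?_
          rw [Finset.mul_sum]
          refine Finset.sum_congr rfl fun j _ => ?_
          rw [Finset.mul_sum]
          refine Finset.sum_congr rfl fun k _ => ?_
          rw [Finset.mul_sum]
          refine Finset.sum_congr rfl fun l _ => ?_
          rw [ginv_symm hN hu hx a k, ginv_symm hN hu hx b l]
          ring
  -- piece (c)
  have hc : ∑ i, ∑ j, (1/2) * (ginv u x i j * ∑ l, ∑ b,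
        ginv u x b l * d3 u i j l x * Wf u v ξ x b)
      = (1/2) * (∑ p, ∑ q, ginv u x p q * Wf u v ξ x p * Wf u v ξ x q) := by
    calc ∑ i, ∑ j, (1/2) * (ginv u x i j * ∑ l, ∑ b,
          ginv u x b l * d3 u i j l x * Wf u v ξ x b)
        = ∑ i, ∑ j, ∑ l, ∑ b, (1/2) * (ginv u x b l * Wf u v ξ x b *
            (ginv u x i j * d3 u i j l x)) := by
          simp only [Finset.mul_sum]
          all_goals exact Finset.sum_congr rfl fun i _ => Finset.sum_congr rfl fun j _ =>
            Finset.sum_congr rfl fun l _ => Finset.sum_congr rfl fun b _ => by ring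
      _ = ∑ l, ∑ b, ∑ i, ∑ j, (1/2) * (ginv u x b l * Wf u v ξ x b *
            (ginv u x i j * d3 u i j l x)) := sum4_swap _
      _ = ∑ l, ∑ b, (1/2) * (ginv u x l b * Wf u v ξ x l * Wf u v ξ x b) := by
          refine Finset.sum_congr rfl fun l _ => Finset.sum_congr rfl fun b _ => ?_
          calc ∑ i, ∑ j, (1/2) * (ginv u x b l * Wf u v ξ x b *
                (ginv u x i j * d3 u i j l x))
              = ∑ i, ∑ j, ((1/2) * (ginv u x b l * Wf u v ξ x b)) *
                  (ginv u x i j * d3 u i j l x) :=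
                Finset.sum_congr rfl fun i _ => Finset.sum_congr rfl fun j _ => by ring
            _ = ((1/2) * (ginv u x b l * Wf u v ξ x b)) *
                  ∑ i, ∑ j, ginv u x i j * d3 u i j l x := pull22 _ _
            _ = (1/2) * (ginv u x l b * Wf u v ξ x l * Wf u v ξ x b) := by
                rw [conA hN hu hpos hMA hx l, ginv_symm hN hu hx b l]
                ring
      _ = (1/2) * (∑ p, ∑ q, ginv u x p q * Wf u v ξ x p * Wf u v ξ x q) := by
          simp only [Finset.mul_sum]
          all_goals exact Finset.sum_congr rfl fun p _ => Finset.sum_congr rfl fun q _ => by ring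
  rw [ha, hb, hc]
  ring

end AssemblyA
section AssemblyD

variable {N : Set (Fin n → ℝ)} {u : (Fin n → ℝ) → ℝ} {x : Fin n → ℝ}
variable {v ξ : Fin n → ℝ} {c : ℝ}

theorem sum5_last_front (F : Fin n → Fin n → Fin n → Fin n → Fin n → ℝ) :
    ∑ a, ∑ b, ∑ c', ∑ d, ∑ e, F a b c' d e = ∑ e, ∑ a, ∑ b, ∑ c', ∑ d, F a b c' d e := by
  calc ∑ a, ∑ b, ∑ c', ∑ d, ∑ e, F a b c' d e
      = ∑ a, ∑ b, ∑ c', ∑ e, ∑ d, F a b c' d e :=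
        Finset.sum_congr rfl fun a _ => Finset.sum_congr rfl fun b _ =>
          Finset.sum_congr rfl fun c' _ => Finset.sum_comm
    _ = ∑ a, ∑ b, ∑ e, ∑ c', ∑ d, F a b c' d e :=
        Finset.sum_congr rfl fun a _ => Finset.sum_congr rfl fun b _ => Finset.sum_comm
    _ = ∑ a, ∑ e, ∑ b, ∑ c', ∑ d, F a b c' d e :=
        Finset.sum_congr rfl fun a _ => Finset.sum_comm
    _ = ∑ e, ∑ a, ∑ b, ∑ c', ∑ d, F a b c' d e := Finset.sum_comm

theorem SD_eq (hN : IsOpen N) (hu : ContDiffOn ℝ (⊤ : ℕ∞) u N)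
    (hpos : ∀ y ∈ N, (hessian u y).PosDef) (hMA : MAeq u N v ξ c) (hx : x ∈ N) :
    ∑ i, ∑ j, ginv u x i j * (∑ k, ∑ p, Christoffel u k j p x * Christoffel u p i k x)
      = (1/4) * norm3 u x := by
  have hsub : ∀ i j : Fin n, ginv u x i j *
        (∑ k, ∑ p, Christoffel u k j p x * Christoffel u p i k x)
      = ginv u x i j * ∑ k, ∑ p, ((1/2) * ∑ l, ginv u x k l * d3 u j p l x)
          * ((1/2) * ∑ m, ginv u x p m * d3 u i k m x) := by
    intro i j
    refine congrArg (fun t => ginv u x i j * t) ?_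
    refine Finset.sum_congr rfl fun k _ => Finset.sum_congr rfl fun p _ => ?_
    rw [chris_val hN hu hx k j p, chris_val hN hu hx p i k]
  rw [Finset.sum_congr rfl fun i (_ : i ∈ Finset.univ) =>
    Finset.sum_congr rfl fun j (_ : j ∈ Finset.univ) => hsub i j]
  calc ∑ i, ∑ j, ginv u x i j * ∑ k, ∑ p, ((1/2) * ∑ l, ginv u x k l * d3 u j p l x)
          * ((1/2) * ∑ m, ginv u x p m * d3 u i k m x)
      = ∑ i, ∑ j, ∑ k, ∑ p, ∑ l, ∑ m, (1/4) * (ginv u x i j *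
          (ginv u x k m * (ginv u x p l * (d3 u j p m x * d3 u i k l x)))) := by
        simp only [Finset.mul_sum, Finset.sum_mul]
        all_goals exact Finset.sum_congr rfl fun i _ => Finset.sum_congr rfl fun j _ =>
          Finset.sum_congr rfl fun k _ => Finset.sum_congr rfl fun p _ =>
          Finset.sum_congr rfl fun l _ => Finset.sum_congr rfl fun m _ => by ring
    _ = ∑ j, ∑ i, ∑ k, ∑ p, ∑ l, ∑ m, (1/4) * (ginv u x i j *
          (ginv u x k m * (ginv u x p l * (d3 u j p m x * d3 u i k l x)))) :=
        Finset.sum_comm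
    _ = ∑ j, ∑ m, ∑ i, ∑ k, ∑ p, ∑ l, (1/4) * (ginv u x i j *
          (ginv u x k m * (ginv u x p l * (d3 u j p m x * d3 u i k l x)))) :=
        Finset.sum_congr rfl fun j _ => sum5_last_front _
    _ = ∑ j, ∑ m, ∑ p, ∑ i, ∑ k, ∑ l, (1/4) * (ginv u x i j *
          (ginv u x k m * (ginv u x p l * (d3 u j p m x * d3 u i k l x)))) :=
        Finset.sum_congr rfl fun j _ => Finset.sum_congr rfl fun m _ => sum_comm3 _
    _ = (1/4) * norm3 u x := by
        rw [norm3]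
        simp only [Finset.mul_sum]
        have leaf : ∀ j m p i k l : Fin n,
            (1:ℝ)/4 * (ginv u x i j * (ginv u x k m * (ginv u x p l *
                (d3 u j p m x * d3 u i k l x))))
              = 1/4 * (ginv u x j i * ginv u x m k * ginv u x p l
                  * d3 u j m p x * d3 u i k l x) := by
          intro j m p i k l
          rw [ginv_symm hN hu hx j i, ginv_symm hN hu hx m k, d3_symm23 hN hu hx j m p]
          ring
        all_goals exact Finset.sum_congr rfl fun j _ => Finset.sum_congr rfl fun m _ =>
          Finset.sum_congr rfl fun p _ => Finset.sum_congr rfl fun i _ =>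
          Finset.sum_congr rfl fun k _ => Finset.sum_congr rfl fun l _ => leaf j m p i k l

end AssemblyD
theorem refined_scalar_formula {n : ℕ} (hn : 1 ≤ n) (N : Set (Fin n → ℝ)) (hNopen : IsOpen N)
    (hNne : N.Nonempty) (u : (Fin n → ℝ) → ℝ) (hu : ContDiffOn ℝ (⊤ : ℕ∞) u N)
    (hpos : ∀ x ∈ N, (hessian u x).PosDef)
    (v ξ : Fin n → ℝ) (c : ℝ) (hMA : MAeq u N v ξ c) :
    ∀ x ∈ N,
      scalarCurv u x = (1/4) * (norm3 u x -
        ∑ p, ∑ q, ginv u x p q * ((∑ i, pd p (pd i u) x * ξ i) - v p) *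
          ((∑ j, pd q (pd j u) x * ξ j) - v q)) := by
  intro x hx
  show scalarCurv u x = (1/4) * (norm3 u x -
    ∑ p, ∑ q, ginv u x p q * Wf u v ξ x p * Wf u v ξ x q)
  have hric : ∀ i j : Fin n, ginv u x i j * Ricci u i j x
      = ginv u x i j * (∑ k, pd k (Christoffel u k i j) x)
        - ginv u x i j * (∑ k, pd j (Christoffel u k i k) x)
        + ginv u x i j * (∑ k, ∑ p, Christoffel u k k p x * Christoffel u p i j x)
        - ginv u x i j * (∑ k, ∑ p, Christoffel u k j p x * Christoffel u p i k x) := by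
    intro i j
    have : Ricci u i j x = (∑ k, pd k (Christoffel u k i j) x)
        - (∑ k, pd j (Christoffel u k i k) x)
        + (∑ k, ∑ p, Christoffel u k k p x * Christoffel u p i j x)
        - (∑ k, ∑ p, Christoffel u k j p x * Christoffel u p i k x) := rfl
    rw [this]; ring
  have hs : scalarCurv u x
      = (∑ i, ∑ j, ginv u x i j * (∑ k, pd k (Christoffel u k i j) x))
        - (∑ i, ∑ j, ginv u x i j * (∑ k, pd j (Christoffel u k i k) x))
        + (∑ i, ∑ j, ginv u x i j *
            (∑ k, ∑ p, Christoffel u k k p x * Christoffel u p i j x))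
        - (∑ i, ∑ j, ginv u x i j *
            (∑ k, ∑ p, Christoffel u k j p x * Christoffel u p i k x)) := by
    show ∑ i, ∑ j, ginv u x i j * Ricci u i j x = _
    rw [Finset.sum_congr rfl fun i (_ : i ∈ Finset.univ) =>
      Finset.sum_congr rfl fun j (_ : j ∈ Finset.univ) => hric i j]
    rw [Finset.sum_congr rfl fun i (_ : i ∈ Finset.univ) => Finset.sum_sub_distrib _ _,
      Finset.sum_sub_distrib,
      Finset.sum_congr rfl fun i (_ : i ∈ Finset.univ) => Finset.sum_add_distrib,
      Finset.sum_add_distrib,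
      Finset.sum_congr rfl fun i (_ : i ∈ Finset.univ) => Finset.sum_sub_distrib _ _,
      Finset.sum_sub_distrib]
  rw [hs, SA_eq hNopen hu hpos hMA hx, SB_eq hNopen hu hpos hMA hx,
    SC_eq hNopen hu hpos hMA hx, SD_eq hNopen hu hpos hMA hx]
  ring

end KRS
end
end

section
/- Covariant Hessian of the canonical weight function: if u solves the weighted Monge–Ampère equation and φ := (1/2)(u_{,p} ξ^p + v_q x^q), then at every point of N one has (∇²φ)_{ij} = (1/4) u_{,ijp} ξ^p − (1/4) g^{pq} u_{,ijp} v_q. -/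
open scoped BigOperators
noncomputable section

namespace KRS

variable {n : ℕ}

open scoped ContDiff

section Aux

variable {N : Set (Fin n → ℝ)}

lemma pd_contDiffOn (hN : IsOpen N) {f : (Fin n → ℝ) → ℝ}
    (hf : ContDiffOn ℝ ∞ f N) (i : Fin n) : ContDiffOn ℝ ∞ (pd i f) N := by
  have h := hf.fderiv_of_isOpen hN (m := ∞) (by exact_mod_cast le_top)
  exact (ContinuousLinearMap.apply ℝ ℝ (Pi.single i 1)).contDiff.comp_contDiffOn h

lemma pd_diffAt (hN : IsOpen N) {f : (Fin n → ℝ) → ℝ}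
    (hf : ContDiffOn ℝ ∞ f N) {x : Fin n → ℝ} (hx : x ∈ N) : DifferentiableAt ℝ f x :=
  (hf.contDiffAt (hN.mem_nhds hx)).differentiableAt (by simp)

lemma fderiv_diffAt (hN : IsOpen N) {f : (Fin n → ℝ) → ℝ}
    (hf : ContDiffOn ℝ ∞ f N) {x : Fin n → ℝ} (hx : x ∈ N) :
    DifferentiableAt ℝ (fderiv ℝ f) x := by
  have h := hf.fderiv_of_isOpen hN (m := ∞) (by exact_mod_cast le_top)
  exact (h.contDiffAt (hN.mem_nhds hx)).differentiableAt (by simp)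

lemma pd_congr_s8 (hN : IsOpen N) {f g : (Fin n → ℝ) → ℝ} (h : ∀ y ∈ N, f y = g y)
    {x : Fin n → ℝ} (hx : x ∈ N) (i : Fin n) : pd i f x = pd i g x := by
  unfold pd
  rw [Filter.EventuallyEq.fderiv_eq (Filter.eventuallyEq_of_mem (hN.mem_nhds hx) h)]

lemma pd_hasFDerivAt_eq {f : (Fin n → ℝ) → ℝ} {L : (Fin n → ℝ) →L[ℝ] ℝ}
    {x : Fin n → ℝ} (h : HasFDerivAt f L x) (i : Fin n) :
    pd i f x = L (Pi.single i 1) := by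
  unfold pd; rw [h.fderiv]

lemma pd_pd_eq (hN : IsOpen N) {f : (Fin n → ℝ) → ℝ}
    (hf : ContDiffOn ℝ ∞ f N) {x : Fin n → ℝ} (hx : x ∈ N) (i j : Fin n) :
    pd i (pd j f) x = fderiv ℝ (fderiv ℝ f) x (Pi.single i 1) (Pi.single j 1) := by
  have hd' := fderiv_diffAt hN hf hx
  have h2 : HasFDerivAt (pd j f)
      ((ContinuousLinearMap.apply ℝ ℝ (Pi.single j 1)).comp (fderiv ℝ (fderiv ℝ f) x)) x := by
    exact ((ContinuousLinearMap.apply ℝ ℝ (Pi.single j 1)).hasFDerivAt).comp x hd'.hasFDerivAt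
  rw [pd_hasFDerivAt_eq h2 i]; rfl

lemma pd_comm_s8 (hN : IsOpen N) {f : (Fin n → ℝ) → ℝ}
    (hf : ContDiffOn ℝ ∞ f N) {x : Fin n → ℝ} (hx : x ∈ N) (i j : Fin n) :
    pd i (pd j f) x = pd j (pd i f) x := by
  have hev : ∀ᶠ y in nhds x, HasFDerivAt f (fderiv ℝ f y) y := by
    filter_upwards [hN.mem_nhds hx] with y hy
    exact (pd_diffAt hN hf hy).hasFDerivAt
  have hsym := second_derivative_symmetric_of_eventually_of_real hev
    (fderiv_diffAt hN hf hx).hasFDerivAt (Pi.single i 1) (Pi.single j 1)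
  rw [pd_pd_eq hN hf hx i j, pd_pd_eq hN hf hx j i, hsym]

lemma d3_comm12 (hN : IsOpen N) {u : (Fin n → ℝ) → ℝ}
    (hu : ContDiffOn ℝ ∞ u N) {x : Fin n → ℝ} (hx : x ∈ N) (i j l : Fin n) :
    d3 u i j l x = d3 u j i l x :=
  pd_comm_s8 hN (pd_contDiffOn hN hu l) hx i j

lemma d3_comm23 (hN : IsOpen N) {u : (Fin n → ℝ) → ℝ}
    (hu : ContDiffOn ℝ ∞ u N) {x : Fin n → ℝ} (hx : x ∈ N) (i j l : Fin n) :
    d3 u i j l x = d3 u i l j x :=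
  pd_congr_s8 hN (fun y hy => pd_comm_s8 hN hu hy j l) hx i

lemma d3_rot (hN : IsOpen N) {u : (Fin n → ℝ) → ℝ}
    (hu : ContDiffOn ℝ ∞ u N) {x : Fin n → ℝ} (hx : x ∈ N) (i j l : Fin n) :
    d3 u l i j x = d3 u i j l x := by
  rw [d3_comm12 hN hu hx l i j, d3_comm23 hN hu hx i l j]

lemma pd_weight (hN : IsOpen N) {u : (Fin n → ℝ) → ℝ}
    (hu : ContDiffOn ℝ ∞ u N) (ξ v : Fin n → ℝ) {x : Fin n → ℝ} (hx : x ∈ N) (j : Fin n) :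
    pd j (weight u ξ v) x = (1/2) * ((∑ p, pd j (pd p u) x * ξ p) + v j) := by
  have hterm : ∀ p : Fin n, HasFDerivAt (fun z => pd p u z * ξ p)
      (ξ p • fderiv ℝ (pd p u) x) x := fun p =>
    ((pd_diffAt hN (pd_contDiffOn hN hu p) hx).hasFDerivAt).mul_const (ξ p)
  have hsum1 : HasFDerivAt (fun z => ∑ p, pd p u z * ξ p)
      (∑ p, ξ p • fderiv ℝ (pd p u) x) x :=
    HasFDerivAt.fun_sum (fun p _ => hterm p)
  have hlin : ∀ q : Fin n, HasFDerivAt (fun z : Fin n → ℝ => v q * z q)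
      (v q • (ContinuousLinearMap.proj q : (Fin n → ℝ) →L[ℝ] ℝ)) x := fun q =>
    ((ContinuousLinearMap.proj q : (Fin n → ℝ) →L[ℝ] ℝ).hasFDerivAt).const_mul (v q)
  have hsum2 : HasFDerivAt (fun z : Fin n → ℝ => ∑ q, v q * z q)
      (∑ q, v q • (ContinuousLinearMap.proj q : (Fin n → ℝ) →L[ℝ] ℝ)) x :=
    HasFDerivAt.fun_sum (fun q _ => hlin q)
  have hW : HasFDerivAt (weight u ξ v)
      ((1/2 : ℝ) • ((∑ p, ξ p • fderiv ℝ (pd p u) x)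
        + ∑ q, v q • (ContinuousLinearMap.proj q : (Fin n → ℝ) →L[ℝ] ℝ))) x :=
    (hsum1.add hsum2).const_mul (1/2)
  rw [pd_hasFDerivAt_eq hW j]
  simp only [ContinuousLinearMap.smul_apply, ContinuousLinearMap.add_apply,
    ContinuousLinearMap.sum_apply, ContinuousLinearMap.proj_apply, smul_eq_mul,
    Pi.single_apply, mul_ite, mul_one, mul_zero, Finset.sum_ite_eq', Finset.mem_univ, if_true]
  congr 1
  congr 1
  exact Finset.sum_congr rfl fun p _ => mul_comm _ _

lemma pd_pd_weight (hN : IsOpen N) {u : (Fin n → ℝ) → ℝ}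
    (hu : ContDiffOn ℝ ∞ u N) (ξ v : Fin n → ℝ) {x : Fin n → ℝ} (hx : x ∈ N) (i j : Fin n) :
    pd i (pd j (weight u ξ v)) x = (1/2) * ∑ p, d3 u i j p x * ξ p := by
  rw [pd_congr_s8 hN (fun y hy => pd_weight hN hu ξ v hy j) hx i]
  have hterm : ∀ p : Fin n, HasFDerivAt (fun z => pd j (pd p u) z * ξ p)
      (ξ p • fderiv ℝ (pd j (pd p u)) x) x := fun p =>
    ((pd_diffAt hN (pd_contDiffOn hN (pd_contDiffOn hN hu p) j) hx).hasFDerivAt).mul_const (ξ p)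
  have hG : HasFDerivAt (fun y => (1/2 : ℝ) * ((∑ p, pd j (pd p u) y * ξ p) + v j))
      ((1/2 : ℝ) • (∑ p, ξ p • fderiv ℝ (pd j (pd p u)) x)) x :=
    ((HasFDerivAt.fun_sum (fun p _ => hterm p)).add_const (v j)).const_mul (1/2)
  rw [pd_hasFDerivAt_eq hG i]
  simp only [ContinuousLinearMap.smul_apply, ContinuousLinearMap.sum_apply, smul_eq_mul]
  congr 1
  exact Finset.sum_congr rfl fun p _ => mul_comm _ _

lemma main_algebra (T xi v : Fin n → ℝ) (G H : Fin n → Fin n → ℝ)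
    (hGH : ∀ l p, ∑ k, G k l * H k p = if l = p then (1:ℝ) else 0)
    (hG : ∀ k l, G k l = G l k) :
    (1/2) * (∑ p, T p * xi p)
      - ∑ k, ((1/2) * ∑ l, G k l * T l) * ((1/2) * ((∑ p, H k p * xi p) + v k))
    = (1/4) * (∑ p, T p * xi p) - (1/4) * ∑ p, ∑ q, G p q * T p * v q := by
  have key : ∑ k, (∑ l, G k l * T l) * (∑ p, H k p * xi p) = ∑ p, T p * xi p := by
    have h1 : ∀ l p, ∑ k, (G k l * T l) * (H k p * xi p)
        = (if l = p then (1:ℝ) else 0) * (T l * xi p) := by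
      intro l p
      rw [← hGH l p, Finset.sum_mul]
      exact Finset.sum_congr rfl fun k _ => by ring
    calc ∑ k, (∑ l, G k l * T l) * (∑ p, H k p * xi p)
        = ∑ k, ∑ l, (G k l * T l) * (∑ p, H k p * xi p) :=
          Finset.sum_congr rfl fun k _ => Finset.sum_mul _ _ _
      _ = ∑ k, ∑ l, ∑ p, (G k l * T l) * (H k p * xi p) :=
          Finset.sum_congr rfl fun k _ => Finset.sum_congr rfl fun l _ => Finset.mul_sum _ _ _
      _ = ∑ l, ∑ k, ∑ p, (G k l * T l) * (H k p * xi p) := Finset.sum_comm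
      _ = ∑ l, ∑ p, ∑ k, (G k l * T l) * (H k p * xi p) :=
          Finset.sum_congr rfl fun l _ => Finset.sum_comm
      _ = ∑ l, ∑ p, (if l = p then (1:ℝ) else 0) * (T l * xi p) :=
          Finset.sum_congr rfl fun l _ => Finset.sum_congr rfl fun p _ => h1 l p
      _ = ∑ p, T p * xi p := by
          simp [ite_mul, Finset.sum_ite_eq]
  have keyv : ∑ k, (∑ l, G k l * T l) * v k = ∑ p, ∑ q, G p q * T p * v q := by
    calc ∑ k, (∑ l, G k l * T l) * v k
        = ∑ k, ∑ l, G k l * T l * v k := by simp only [Finset.sum_mul]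
      _ = ∑ l, ∑ k, G k l * T l * v k := Finset.sum_comm
      _ = ∑ p, ∑ q, G p q * T p * v q :=
          Finset.sum_congr rfl fun l _ => Finset.sum_congr rfl fun k _ => by rw [hG]
  have expand : ∀ k, ((1/2) * ∑ l, G k l * T l) * ((1/2) * ((∑ p, H k p * xi p) + v k))
      = (1/4) * ((∑ l, G k l * T l) * (∑ p, H k p * xi p))
        + (1/4) * ((∑ l, G k l * T l) * v k) := fun k => by ring
  simp only [expand, Finset.sum_add_distrib, ← Finset.mul_sum]
  rw [key, keyv]
  ring

end Aux

theorem covHess_of_weight {n : ℕ} (hn : 1 ≤ n) (N : Set (Fin n → ℝ)) (hNopen : IsOpen N)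
    (hNne : N.Nonempty) (u : (Fin n → ℝ) → ℝ) (hu : ContDiffOn ℝ (⊤ : ℕ∞) u N)
    (hpos : ∀ x ∈ N, (hessian u x).PosDef)
    (v ξ : Fin n → ℝ) (c : ℝ) (hMA : MAeq u N v ξ c) :
    ∀ x ∈ N, ∀ i j : Fin n,
      covHess u (weight u ξ v) i j x =
        (1/4) * (∑ p, d3 u i j p x * ξ p)
        - (1/4) * ∑ p, ∑ q, ginv u x p q * d3 u i j p x * v q := by
  intro x hx i j
  have hu' : ContDiffOn ℝ ∞ u N := hu.of_le (by simp)
  -- symmetry of the Hessian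
  have hHsymm : (hessian u x).transpose = hessian u x :=
    Matrix.ext fun a b => pd_comm_s8 hNopen hu' hx b a
  have hdet : IsUnit (hessian u x).det := (hpos x hx).det_pos.ne'.isUnit
  have hinv_symm : ∀ p q, ginv u x p q = ginv u x q p := by
    intro p q
    have : (ginv u x).transpose = ginv u x := by
      unfold ginv
      rw [Matrix.transpose_nonsing_inv, hHsymm]
    conv_rhs => rw [← this]
    rfl
  have hGH : ∀ l p, ∑ k, ginv u x k l * hessian u x k p = if l = p then (1:ℝ) else 0 := by
    intro l p
    have h1 : ∑ k, ginv u x k l * hessian u x k p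
        = ∑ k, ginv u x l k * hessian u x k p :=
      Finset.sum_congr rfl fun k _ => by rw [hinv_symm k l]
    have h0 : ginv u x * hessian u x = 1 := Matrix.nonsing_inv_mul _ hdet
    have h2 : ∑ k, ginv u x l k * hessian u x k p = if l = p then (1:ℝ) else 0 := by
      rw [← Matrix.mul_apply, h0, Matrix.one_apply]
    rw [h1, h2]
  have hChris : ∀ k, Christoffel u k i j x
      = (1/2) * ∑ l, ginv u x k l * d3 u i j l x := by
    intro k
    unfold Christoffel
    congr 1
    refine Finset.sum_congr rfl fun l _ => ?_
    rw [← d3_comm12 hNopen hu' hx i j l, d3_rot hNopen hu' hx i j l]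
    ring
  show pd i (pd j (weight u ξ v)) x
      - (∑ k, Christoffel u k i j x * pd k (weight u ξ v) x) = _
  rw [pd_pd_weight hNopen hu' ξ v hx i j]
  have hsum : ∑ k, Christoffel u k i j x * pd k (weight u ξ v) x
      = ∑ k, ((1/2) * ∑ l, ginv u x k l * d3 u i j l x)
          * ((1/2) * ((∑ p, hessian u x k p * ξ p) + v k)) := by
    refine Finset.sum_congr rfl fun k _ => ?_
    rw [hChris k, pd_weight hNopen hu' ξ v hx k]
    rfl
  rw [hsum]
  exact main_algebra (fun l => d3 u i j l x) ξ v (fun k l => ginv u x k l)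
    (fun k p => hessian u x k p) hGH (fun k l => hinv_symm k l)

end KRS
end
end
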